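/- The two spheres S± given by (x − 1/√2)² + (y − (1 − cos D)/(√2 sin D))² + (z ± 1)² = (1 − cos D)/sin² D, for D ∈ (0, π), intersect the unit sphere and the (Euclidean) angle A between them at their intersection satisfies cos A = 1 + 2 cos D. -/

import Mathlib

open Real

/-- The two spheres `S±` of radius `r = √((1 − cos D)/sin² D)` centered at
`(1/√2, (1 − cos D)/(√2 sin D), ∓1)`, for `D ∈ (0, π)`, each intersect the unit
sphere, and the angle `A` between them satisfies `cos A = 1 + 2 cos D`
(computed via `cos A = (‖c₁ − c₂‖² − r² − r²)/(2·r·r)`, the sign convention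
appropriate for the dihedral angle). -/
theorem spheres_dihedral_angle (D : ℝ) (hD0 : 0 < D) (hDπ : D < π) :
    let c₁ : EuclideanSpace ℝ (Fin 3) :=
      !₂[1 / Real.sqrt 2, (1 - Real.cos D) / (Real.sqrt 2 * Real.sin D), -1]
    let c₂ : EuclideanSpace ℝ (Fin 3) :=
      !₂[1 / Real.sqrt 2, (1 - Real.cos D) / (Real.sqrt 2 * Real.sin D), 1]
    let r : ℝ := Real.sqrt ((1 - Real.cos D) / (Real.sin D) ^ 2)
    (∃ p : EuclideanSpace ℝ (Fin 3), ‖p‖ = 1 ∧ dist p c₁ = r) ∧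
    (∃ p : EuclideanSpace ℝ (Fin 3), ‖p‖ = 1 ∧ dist p c₂ = r) ∧
    (dist c₁ c₂ ^ 2 - r ^ 2 - r ^ 2) / (2 * r * r) = 1 + 2 * Real.cos D := by
  intro c₁ c₂ r
  have hs : 0 < Real.sin D := Real.sin_pos_of_pos_of_lt_pi hD0 hDπ
  have hsc := Real.sin_sq_add_cos_sq D
  have hs2 : Real.sin D ^ 2 = 1 - Real.cos D ^ 2 := by linarith
  have hss : 0 < Real.sin D ^ 2 := by positivity
  have hc1 : Real.cos D < 1 := by nlinarith
  have hc2 : -1 < Real.cos D := by nlinarith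
  have h1c : (0:ℝ) < 1 - Real.cos D := by linarith
  have h2 : (0:ℝ) < Real.sqrt 2 := by positivity
  have h2' : Real.sqrt 2 ^ 2 = 2 := Real.sq_sqrt (by norm_num)
  have hkey : (1 / Real.sqrt 2) ^ 2 + ((1 - Real.cos D) / (Real.sqrt 2 * Real.sin D)) ^ 2
      = (1 - Real.cos D) / (Real.sin D) ^ 2 := by
    rw [div_pow, div_pow, one_pow, mul_pow, h2']
    field_simp
    nlinarith [hs2]
  have hr2 : r ^ 2 = (1 - Real.cos D) / (Real.sin D) ^ 2 :=
    Real.sq_sqrt (by positivity)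
  have hrr : r * r = (1 - Real.cos D) / (Real.sin D) ^ 2 := by rw [← sq]; exact hr2
  have hdist : ∀ z : ℝ, @dist (EuclideanSpace ℝ (Fin 3)) _ !₂[0, 0, z]
      !₂[1 / Real.sqrt 2, (1 - Real.cos D) / (Real.sqrt 2 * Real.sin D), z] = r := by
    intro z
    rw [EuclideanSpace.dist_eq]
    simp only [PiLp.toLp_apply, Fin.sum_univ_three, Matrix.cons_val_zero, Matrix.cons_val_one,
      Matrix.head_cons, Matrix.cons_val_two, Matrix.tail_cons]
    rw [show r = Real.sqrt ((1 - Real.cos D) / (Real.sin D) ^ 2) from rfl]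
    congr 1
    rw [← hkey]
    simp [Real.dist_eq, sq_abs]
  refine ⟨⟨!₂[0, 0, -1], ?_, hdist (-1)⟩, ⟨!₂[0, 0, 1], ?_, hdist 1⟩, ?_⟩
  · rw [EuclideanSpace.norm_eq]
    simp [Fin.sum_univ_three]
  · rw [EuclideanSpace.norm_eq]
    simp [Fin.sum_univ_three]
  · have hd : dist c₁ c₂ = 2 := by
      rw [EuclideanSpace.dist_eq]
      simp only [c₁, c₂, PiLp.toLp_apply, Fin.sum_univ_three, Matrix.cons_val_zero, Matrix.cons_val_one,
        Matrix.head_cons, Matrix.cons_val_two, Matrix.tail_cons]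
      rw [show dist (1 / Real.sqrt 2) (1 / Real.sqrt 2) ^ 2 +
          dist ((1 - Real.cos D) / (Real.sqrt 2 * Real.sin D))
            ((1 - Real.cos D) / (Real.sqrt 2 * Real.sin D)) ^ 2 +
          dist (-1 : ℝ) 1 ^ 2 = 2 ^ 2 by simp [Real.dist_eq]; norm_num]
      exact Real.sqrt_sq (by norm_num)
    rw [hd, hr2, mul_assoc, hrr]
    field_simp
    nlinarith [hs2]
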